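/- Let L be a Moufang loop of class at most 2. Then [c,d,e]⁶ = 1 for all c, d, e ∈ L. Consequently, the nuclearly-derived subloop L* of L (the smallest normal subloop of L whose quotient is a group, which here equals the subloop generated by all associators) is an abelian group of exponent dividing 6. -/

import Mathlib

/-!
In a Moufang loop of class at most two the associator is central and, by the Moufang
identity, alternating: invariant under cyclic shifts of its arguments and inverted by
transpositions. Expanding the commutator `[x, yz]` and `[x, zy]`, which agree because
`yz = zy[y,z]` with `[y,z]` central, then gives `[x,y,z]⁻³ = [x,y,z]³` in the abelian
group `Z(L)`. So the associators lie in the subgroup of `Z(L)` of exponent dividing 6, and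
so does the subloop they generate.
-/

/-- An inverse property loop: a set with multiplication, identity, and two-sided
inverses satisfying `a⁻¹(ax) = x = (xa)a⁻¹`. -/
class IPLoop (L : Type*) extends Mul L, One L, Inv L where
  one_mul : ∀ a : L, 1 * a = a
  mul_one : ∀ a : L, a * 1 = a
  inv_mul_cancel_left : ∀ a x : L, a⁻¹ * (a * x) = x
  mul_inv_cancel_right : ∀ a x : L, (x * a) * a⁻¹ = x

namespace IPLoop

variable {L : Type*} [IPLoop L]

/-- Powers with natural number exponent, `c^(n+1) = c * c^n`. -/
def npow (c : L) : ℕ → L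
  | 0 => 1
  | n + 1 => c * npow c n

instance : Pow L ℕ := ⟨npow⟩

/-- Powers with integer exponent. -/
def zpow (c : L) : ℤ → L
  | Int.ofNat n => c ^ n
  | Int.negSucc n => (c ^ (n + 1))⁻¹

instance : Pow L ℤ := ⟨zpow⟩

/-- The commutator `[c,d] = (dc)⁻¹(cd)`. -/
def comm (c d : L) : L := (d * c)⁻¹ * (c * d)

/-- The associator `[c,d,e] = (c(de))⁻¹((cd)e)`. -/
def assoc (c d e : L) : L := (c * (d * e))⁻¹ * ((c * d) * e)

/-- Membership in the center `Z(L)`. -/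
def inCenter (z : L) : Prop :=
  (∀ x : L, comm z x = 1) ∧
  ∀ x y : L, assoc z x y = 1 ∧ assoc x z y = 1 ∧ assoc x y z = 1

/-- The Moufang identity `((dc)e)c = d(c(ec))`. -/
def IsMoufang (L : Type*) [IPLoop L] : Prop :=
  ∀ c d e : L, ((d * c) * e) * c = d * (c * (e * c))

/-- A loop is of (central nilpotence) class at most 2 if every commutator and
every associator lies in the center. -/
def ClassTwo (L : Type*) [IPLoop L] : Prop :=
  (∀ c d : L, inCenter (comm c d)) ∧ ∀ c d e : L, inCenter (assoc c d e)

/-- The order of an element: least `n > 0` with `c^n = 1` (or `0` if none). -/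
noncomputable def ordOf (c : L) : ℕ := sInf {n : ℕ | 0 < n ∧ c ^ n = 1}

/-- The subloop generated by a subset `S`. -/
def subloopClosure (S : Set L) : Set L :=
  ⋂₀ {T : Set L | (1 : L) ∈ T ∧ (∀ x ∈ T, x⁻¹ ∈ T) ∧
      (∀ x ∈ T, ∀ y ∈ T, x * y ∈ T) ∧ S ⊆ T}

end IPLoop

namespace IPLoop

variable {L : Type*} [IPLoop L]

protected theorem mul_left_cancel {a x y : L} (h : a * x = a * y) : x = y := by
  rw [← IPLoop.inv_mul_cancel_left a x, h, IPLoop.inv_mul_cancel_left]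

protected theorem mul_right_cancel {a x y : L} (h : x * a = y * a) : x = y := by
  rw [← IPLoop.mul_inv_cancel_right a x, h, IPLoop.mul_inv_cancel_right]

protected theorem mul_inv_cancel (a : L) : a * a⁻¹ = 1 := by
  simpa only [IPLoop.one_mul] using IPLoop.mul_inv_cancel_right a 1

protected theorem inv_mul_cancel (a : L) : a⁻¹ * a = 1 := by
  simpa only [IPLoop.mul_one] using IPLoop.inv_mul_cancel_left a 1

protected theorem inv_inv (a : L) : a⁻¹⁻¹ = a :=
  IPLoop.mul_left_cancel (a := a⁻¹) <| by rw [IPLoop.mul_inv_cancel, IPLoop.inv_mul_cancel]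

protected theorem mul_inv_cancel_left (a x : L) : a * (a⁻¹ * x) = x := by
  simpa only [IPLoop.inv_inv] using IPLoop.inv_mul_cancel_left a⁻¹ x

protected theorem inv_mul_cancel_right (a x : L) : x * a⁻¹ * a = x := by
  simpa only [IPLoop.inv_inv] using IPLoop.mul_inv_cancel_right a⁻¹ x

protected theorem eq_inv_of_mul_eq_one_left {a b : L} (h : b * a = 1) : b = a⁻¹ := by
  rw [← IPLoop.mul_inv_cancel_right a b, h, IPLoop.one_mul]

protected theorem mul_inv_rev (a b : L) : (a * b)⁻¹ = b⁻¹ * a⁻¹ := by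
  have hb : a⁻¹ * (b⁻¹ * a⁻¹)⁻¹ = b := by
    simpa only [IPLoop.mul_inv_cancel_left] using IPLoop.mul_inv_cancel_right (b⁻¹ * a⁻¹) b
  calc (a * b)⁻¹ = (a * (a⁻¹ * (b⁻¹ * a⁻¹)⁻¹))⁻¹ := by rw [hb]
    _ = b⁻¹ * a⁻¹ := by rw [IPLoop.mul_inv_cancel_left, IPLoop.inv_inv]

theorem assoc_spec (x y z : L) : x * y * z = x * (y * z) * assoc x y z :=
  (IPLoop.mul_inv_cancel_left _ _).symm

theorem assoc_eq_of_mul_mul {x y z w : L} (h : x * y * z = x * (y * z) * w) :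
    assoc x y z = w :=
  IPLoop.mul_left_cancel ((assoc_spec x y z).symm.trans h)

theorem assoc_eq_one_iff {x y z : L} : assoc x y z = 1 ↔ x * y * z = x * (y * z) := by
  refine ⟨fun h => ?_, fun h => assoc_eq_of_mul_mul (by rw [IPLoop.mul_one, h])⟩
  rw [assoc_spec, h, IPLoop.mul_one]

theorem comm_spec (x y : L) : x * y = y * x * comm x y :=
  (IPLoop.mul_inv_cancel_left _ _).symm

theorem comm_eq_of_mul {x y w : L} (h : x * y = y * x * w) : comm x y = w :=
  IPLoop.mul_left_cancel ((comm_spec x y).symm.trans h)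

theorem comm_eq_one_iff {x y : L} : comm x y = 1 ↔ x * y = y * x := by
  refine ⟨fun h => ?_, fun h => comm_eq_of_mul (by rw [IPLoop.mul_one, h])⟩
  rw [comm_spec, h, IPLoop.mul_one]

theorem inCenter_iff {k : L} :
    inCenter k ↔ (∀ x, k * x = x * k) ∧
      ∀ x y, k * x * y = k * (x * y) ∧ x * k * y = x * (k * y) ∧ x * y * k = x * (y * k) := by
  simp only [inCenter, comm_eq_one_iff, assoc_eq_one_iff]

namespace inCenter

variable {k : L} (hk : inCenter k)
include hk

protected theorem mul_comm (x : L) : k * x = x * k := (inCenter_iff.1 hk).1 x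

theorem mul_assoc_left (x y : L) : k * x * y = k * (x * y) := ((inCenter_iff.1 hk).2 x y).1

theorem mul_assoc_mid (x y : L) : x * k * y = x * (k * y) := ((inCenter_iff.1 hk).2 x y).2.1

theorem mul_assoc_right (x y : L) : x * y * k = x * (y * k) := ((inCenter_iff.1 hk).2 x y).2.2

protected theorem mul_right_comm (x y : L) : x * k * y = x * y * k := by
  rw [hk.mul_assoc_mid, hk.mul_comm, hk.mul_assoc_right]

protected theorem mul_left_comm (x y : L) : x * (k * y) = k * (x * y) := by
  rw [← hk.mul_assoc_mid, ← hk.mul_comm, hk.mul_assoc_left]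

protected theorem inv : inCenter k⁻¹ := by
  have hcomm (x : L) : k⁻¹ * x = x * k⁻¹ := by
    simpa only [IPLoop.mul_inv_rev, IPLoop.inv_inv] using (congrArg (·⁻¹) (hk.mul_comm x⁻¹)).symm
  refine inCenter_iff.2 ⟨hcomm, fun x y => ⟨?_, ?_, ?_⟩⟩
  · refine IPLoop.mul_left_cancel (a := k) ?_
    rw [← hk.mul_assoc_left, IPLoop.mul_inv_cancel_left, IPLoop.mul_inv_cancel_left]
  · refine IPLoop.mul_right_cancel (a := k) ?_
    rw [hk.mul_assoc_right, ← hk.mul_comm, ← hk.mul_assoc_mid, IPLoop.inv_mul_cancel_right,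
      hk.mul_assoc_right, hcomm, IPLoop.inv_mul_cancel_right]
  · refine IPLoop.mul_right_cancel (a := k) ?_
    rw [IPLoop.inv_mul_cancel_right, hk.mul_assoc_right, IPLoop.inv_mul_cancel_right]

end inCenter

theorem inCenter_one : inCenter (1 : L) :=
  inCenter_iff.2 ⟨fun x => by rw [IPLoop.one_mul, IPLoop.mul_one], fun x y =>
    ⟨by simp only [IPLoop.one_mul], by simp only [IPLoop.one_mul, IPLoop.mul_one],
      by simp only [IPLoop.mul_one]⟩⟩

theorem inCenter.mul {k l : L} (hk : inCenter k) (hl : inCenter l) : inCenter (k * l) := by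
  refine inCenter_iff.2 ⟨fun x => ?_, fun x y => ⟨?_, ?_, ?_⟩⟩
  · rw [hk.mul_assoc_left, hl.mul_comm, ← hk.mul_left_comm]
  · rw [hk.mul_assoc_left l x, hk.mul_assoc_left, hl.mul_assoc_left, hk.mul_assoc_left]
  · rw [← hl.mul_assoc_right x k, hl.mul_assoc_mid, hk.mul_assoc_mid, hk.mul_assoc_left]
  · rw [← hl.mul_assoc_right, hk.mul_assoc_right, hl.mul_assoc_right, hl.mul_assoc_right]

theorem inCenter.pow {k : L} (hk : inCenter k) : ∀ n : ℕ, inCenter (k ^ n)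
  | 0 => inCenter_one
  | n + 1 => hk.mul (hk.pow n)

variable (L) in
def Center : Type _ := {z : L // inCenter z}

instance : CommGroup (Center L) where
  mul a b := ⟨a.1 * b.1, a.2.mul b.2⟩
  one := ⟨1, inCenter_one⟩
  inv a := ⟨a.1⁻¹, a.2.inv⟩
  npow n a := ⟨a.1 ^ n, a.2.pow n⟩
  mul_assoc a b c := Subtype.ext (a.2.mul_assoc_left _ _)
  one_mul a := Subtype.ext (IPLoop.one_mul a.1)
  mul_one a := Subtype.ext (IPLoop.mul_one a.1)
  npow_zero _ := rfl
  npow_succ n a := Subtype.ext (a.2.mul_comm (a.1 ^ n))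
  inv_mul_cancel a := Subtype.ext (IPLoop.inv_mul_cancel a.1)
  mul_comm a b := Subtype.ext (a.2.mul_comm b.1)

theorem Center.val_pow_eq_one {a : Center L} {n : ℕ} (h : a ^ n = 1) : a.1 ^ n = 1 :=
  congrArg Subtype.val h

theorem subloopClosure_subset_of_subgroup {S : Set L} (H : Subgroup (Center L))
    (hS : S ⊆ {x : L | ∃ a ∈ H, a.1 = x}) :
    subloopClosure S ⊆ {x : L | ∃ a ∈ H, a.1 = x} := by
  refine Set.sInter_subset_of_mem ⟨⟨1, H.one_mem, rfl⟩, ?_, ?_, hS⟩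
  · rintro _ ⟨a, ha, rfl⟩
    exact ⟨a⁻¹, H.inv_mem ha, rfl⟩
  · rintro _ ⟨a, ha, rfl⟩ _ ⟨b, hb, rfl⟩
    exact ⟨a * b, H.mul_mem ha hb, rfl⟩

theorem IsMoufang.flexible (hM : IsMoufang L) (c e : L) : c * e * c = c * (e * c) := by
  simpa only [IPLoop.one_mul] using hM c 1 e

theorem assoc_mul_left_self (hM : IsMoufang L) (h2 : ClassTwo L) (d c e : L) :
    assoc d (c * e) c = (assoc d c e)⁻¹ := by
  have hA := h2.2 d c e
  refine IPLoop.eq_inv_of_mul_eq_one_left (IPLoop.mul_left_cancel (a := d * (c * (e * c))) ?_)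
  calc d * (c * (e * c)) * (assoc d (c * e) c * assoc d c e)
      = d * (c * e * c) * assoc d (c * e) c * assoc d c e := by
        rw [hM.flexible, hA.mul_assoc_right]
    _ = d * (c * e) * c * assoc d c e := by rw [← assoc_spec]
    _ = d * (c * e) * assoc d c e * c := (hA.mul_right_comm _ _).symm
    _ = d * (c * (e * c)) * 1 := by rw [← assoc_spec, hM c d e, IPLoop.mul_one]

theorem assoc_mul_inv_right (h2 : ClassTwo L) (w x y : L) :
    assoc w (x * y) y⁻¹ = (assoc w x y)⁻¹ := by
  have hA := (h2.2 w x y).inv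
  refine assoc_eq_of_mul_mul ?_
  calc w * (x * y) * y⁻¹ = w * x * y * (assoc w x y)⁻¹ * y⁻¹ := by
        rw [assoc_spec w x y, IPLoop.mul_inv_cancel_right]
    _ = w * x * y * y⁻¹ * (assoc w x y)⁻¹ := hA.mul_right_comm _ _
    _ = w * (x * y * y⁻¹) * (assoc w x y)⁻¹ := by simp only [IPLoop.mul_inv_cancel_right]

theorem assoc_swap_right (hM : IsMoufang L) (h2 : ClassTwo L) (d u c : L) :
    assoc d u c = (assoc d c u)⁻¹ := by
  have hshift (u c : L) : assoc d u c = (assoc d c (c⁻¹ * u))⁻¹ := by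
    simpa only [IPLoop.mul_inv_cancel_left] using assoc_mul_left_self hM h2 d c (c⁻¹ * u)
  have hinv : assoc d c (c⁻¹ * u) = (assoc d u (u⁻¹ * c))⁻¹ := by
    simpa only [IPLoop.mul_inv_cancel_left, IPLoop.mul_inv_rev, IPLoop.inv_inv] using
      assoc_mul_inv_right h2 d u (u⁻¹ * c)
  rw [hshift u c, hshift c u, ← hinv]

theorem assoc_inv_rev (h2 : ClassTwo L) (x y z : L) :
    assoc z⁻¹ y⁻¹ x⁻¹ = assoc x y z := by
  have hA := (h2.2 x y z).inv
  have h := congrArg (·⁻¹) (assoc_spec x y z)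
  simp only [IPLoop.mul_inv_rev] at h
  refine assoc_eq_of_mul_mul ?_
  rw [h, hA.mul_comm, IPLoop.inv_mul_cancel_right]

theorem assoc_swap_left (hM : IsMoufang L) (h2 : ClassTwo L) (d u c : L) :
    assoc d u c = (assoc u d c)⁻¹ := by
  rw [← assoc_inv_rev h2 d u c, assoc_swap_right hM h2, assoc_inv_rev h2 u d c]

theorem assoc_rotate (hM : IsMoufang L) (h2 : ClassTwo L) (x y z : L) :
    assoc y z x = assoc x y z := by
  rw [assoc_swap_right hM h2 y z x, assoc_swap_left hM h2 y x z, IPLoop.inv_inv]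

theorem comm_mul_inCenter_right (h2 : ClassTwo L) {k : L} (hk : inCenter k) (x u : L) :
    comm x (u * k) = comm x u := by
  refine comm_eq_of_mul ?_
  calc x * (u * k) = u * x * comm x u * k := by rw [← hk.mul_assoc_right, ← comm_spec]
    _ = u * x * k * comm x u := (h2.1 x u).mul_right_comm _ _
    _ = u * k * x * comm x u := by rw [hk.mul_right_comm u x]

theorem comm_mul_right (h2 : ClassTwo L) (x y z : L) :
    comm x (y * z) = (assoc y z x)⁻¹ *
      (comm x z * (assoc y x z * (comm x y * (assoc x y z)⁻¹))) := by
  have hA₁ := (h2.2 x y z).inv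
  have hA₂ := h2.2 y x z
  have hA₃ := (h2.2 y z x).inv
  have hC₁ := h2.1 x y
  have hC₂ := h2.1 x z
  refine comm_eq_of_mul ?_
  calc x * (y * z)
      = y * x * comm x y * z * (assoc x y z)⁻¹ := by
        rw [← comm_spec, assoc_spec x y z, IPLoop.mul_inv_cancel_right]
    _ = y * (z * x * comm x z) * assoc y x z * comm x y * (assoc x y z)⁻¹ := by
        rw [hC₁.mul_right_comm, assoc_spec y x z, ← comm_spec]
    _ = y * z * x * (assoc y z x)⁻¹ * comm x z * assoc y x z * comm x y * (assoc x y z)⁻¹ := by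
        rw [← hC₂.mul_assoc_right, assoc_spec y z x, IPLoop.mul_inv_cancel_right]
    _ = y * z * x * ((assoc y z x)⁻¹ *
          (comm x z * (assoc y x z * (comm x y * (assoc x y z)⁻¹)))) := by
        rw [hA₁.mul_assoc_right, hA₂.mul_assoc_mid, hC₂.mul_assoc_mid, hA₃.mul_assoc_mid]

theorem assoc_pow_six (hM : IsMoufang L) (h2 : ClassTwo L) (x y z : L) :
    assoc x y z ^ 6 = 1 := by
  have hyz : comm x (y * z) = comm x (z * y) := by
    rw [comm_spec y z, comm_mul_inCenter_right h2 (h2.1 y z)]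
  have hexp := (comm_mul_right h2 x y z).symm.trans (hyz.trans (comm_mul_right h2 x z y))
  rw [assoc_swap_left hM h2 y x z, assoc_swap_right hM h2 x z y, assoc_swap_left hM h2 z y x,
    assoc_rotate hM h2 y z x, assoc_rotate hM h2 x y z, IPLoop.inv_inv] at hexp
  let a : Center L := ⟨assoc x y z, h2.2 x y z⟩
  let c₁ : Center L := ⟨comm x y, h2.1 x y⟩
  let c₂ : Center L := ⟨comm x z, h2.1 x z⟩
  have hgrp : a⁻¹ * (c₂ * (a⁻¹ * (c₁ * a⁻¹))) = a * (c₁ * (a * (c₂ * a))) := Subtype.ext hexp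
  have hcube : a ^ 3 = a⁻¹ ^ 3 := by
    refine mul_right_cancel (b := c₁ * c₂) ?_
    calc a ^ 3 * (c₁ * c₂) = a * (c₁ * (a * (c₂ * a))) := by rw [pow_three]; ac_rfl
      _ = a⁻¹ * (c₂ * (a⁻¹ * (c₁ * a⁻¹))) := hgrp.symm
      _ = a⁻¹ ^ 3 * (c₁ * c₂) := by rw [pow_three]; ac_rfl
  have ha : a ^ 6 = 1 :=
    calc a ^ 6 = a ^ 3 * a⁻¹ ^ 3 := by rw [← hcube, ← pow_add]
      _ = 1 := by rw [inv_pow, mul_inv_cancel]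
  exact Center.val_pow_eq_one ha

end IPLoop

open IPLoop in
/-- In a Moufang loop of class at most 2, every associator has order dividing 6,
and the subloop generated by all associators (the nuclearly-derived subloop)
is an abelian group of exponent dividing 6. -/
theorem stmt5 {L : Type*} [IPLoop L] (hM : IsMoufang L) (h2 : ClassTwo L) :
    (∀ c d e : L, assoc c d e ^ (6 : ℕ) = 1) ∧
    (∀ x ∈ subloopClosure {a : L | ∃ c d e : L, a = assoc c d e},
      x ^ (6 : ℕ) = 1) ∧
    (∀ x ∈ subloopClosure {a : L | ∃ c d e : L, a = assoc c d e},
      ∀ y ∈ subloopClosure {a : L | ∃ c d e : L, a = assoc c d e},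
      x * y = y * x) ∧
    (∀ x ∈ subloopClosure {a : L | ∃ c d e : L, a = assoc c d e},
      ∀ y ∈ subloopClosure {a : L | ∃ c d e : L, a = assoc c d e},
      ∀ z ∈ subloopClosure {a : L | ∃ c d e : L, a = assoc c d e},
      (x * y) * z = x * (y * z)) := by
  have hsub := subloopClosure_subset_of_subgroup (powMonoidHom 6 : Center L →* Center L).ker
    (S := {a : L | ∃ c d e : L, a = assoc c d e}) <| by
      rintro _ ⟨c, d, e, rfl⟩
      exact ⟨(⟨_, h2.2 c d e⟩ : Center L), Subtype.ext (assoc_pow_six hM h2 c d e), rfl⟩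
  refine ⟨assoc_pow_six hM h2, fun x hx => ?_, fun x _ y hy => ?_, fun x hx y _ z _ => ?_⟩
  · obtain ⟨a, ha, rfl⟩ := hsub hx
    exact Center.val_pow_eq_one (MonoidHom.mem_ker.1 ha)
  · obtain ⟨b, -, rfl⟩ := hsub hy
    exact (b.2.mul_comm x).symm
  · obtain ⟨a, -, rfl⟩ := hsub hx
    exact a.2.mul_assoc_left y z
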